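/- arXiv:2404.10604 — 2 statements merged into one kernel-verified Lean document; each statement's English description precedes it below -/
import Mathlib

section
/- The equation of state satisfies the thermodynamic stability conditions: for all ρ > 0 and θ > 0, ∂p/∂ρ(ρ,θ) = θ·P'(ρ·θ^{-3/2}) > 0 and ∂e/∂θ(ρ,θ) = (9/4)·(θ^{3/2}/ρ)·((5/3)·P(Z) - P'(Z)·Z) > 0, where Z = ρ·θ^{-3/2}. -/
/-- `P(Z) = Z` for `Z ≤ Z̃`, `P(Z) = (3/5)·Z^{5/3}·Z̃^{-2/3} + (2/5)·Z̃` for `Z > Z̃`. -/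
noncomputable def Pfun (Zt Z : ℝ) : ℝ :=
  if Z ≤ Zt then Z else (3 / 5) * Z ^ ((5 : ℝ) / 3) * Zt ^ (-((2 : ℝ) / 3)) + (2 / 5) * Zt

/-- The derivative of `P`: `P'(Z) = 1` for `Z ≤ Z̃`, `P'(Z) = (Z/Z̃)^{2/3}` for `Z > Z̃`. -/
noncomputable def P'fun (Zt Z : ℝ) : ℝ :=
  if Z ≤ Zt then 1 else (Z / Zt) ^ ((2 : ℝ) / 3)

/-- Pressure `p(ρ,θ) = θ^{5/2}·P(ρ·θ^{-3/2})`. -/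
noncomputable def pfun (Zt ρ θ : ℝ) : ℝ :=
  θ ^ ((5 : ℝ) / 2) * Pfun Zt (ρ * θ ^ (-((3 : ℝ) / 2)))

/-- Specific internal energy `e(ρ,θ) = (3/2)·θ^{5/2}·P(ρ·θ^{-3/2})/ρ`. -/
noncomputable def efun (Zt ρ θ : ℝ) : ℝ :=
  (3 / 2) * θ ^ ((5 : ℝ) / 2) * Pfun Zt (ρ * θ ^ (-((3 : ℝ) / 2))) / ρ

/-!
Both derivatives follow from the chain rule applied to the self-similar form
`θ^{5/2} P(ρ θ^{-3/2})`, once `P` is known to be differentiable with derivative `P'`: the two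
branches of `P` meet at `Z̃` with value `Z̃` and slope `1`. Positivity of `∂e/∂θ` comes from the
identity `(5/3) P(Z) - P'(Z) Z = (2/3) min Z Z̃`.
-/

open Set Filter Topology

theorem HasDerivAt.ite_le_of_eq {f g : ℝ → ℝ} {d a : ℝ} (hf : HasDerivAt f d a)
    (hg : HasDerivAt g d a) (hfg : f a = g a) :
    HasDerivAt (fun x => if x ≤ a then f x else g x) d a := by
  have hle : HasDerivWithinAt (fun x => if x ≤ a then f x else g x) d (Iic a) a :=
    hf.hasDerivWithinAt.congr (fun x hx => if_pos (mem_Iic.mp hx)) (if_pos le_rfl)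
  have hge : HasDerivWithinAt (fun x => if x ≤ a then f x else g x) d (Ici a) a := by
    refine hg.hasDerivWithinAt.congr (fun x hx => ?_) (by simp [hfg])
    rcases (mem_Ici.mp hx).eq_or_lt with rfl | hlt
    · simp [hfg]
    · simp [not_le.mpr hlt]
  simpa [Iic_union_Ici] using hle.union hge

section UpperBranch

variable {Zt : ℝ}

theorem hasDerivAt_Pfun_upperBranch (hZt : 0 ≤ Zt) {x : ℝ} (hx : 0 < x) :
    HasDerivAt (fun Z : ℝ => (3 / 5) * Z ^ ((5 : ℝ) / 3) * Zt ^ (-((2 : ℝ) / 3)) + (2 / 5) * Zt)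
      ((x / Zt) ^ ((2 : ℝ) / 3)) x := by
  have h := (((Real.hasDerivAt_rpow_const (p := (5 : ℝ) / 3) (Or.inl hx.ne')).const_mul
    ((3 : ℝ) / 5)).mul_const (Zt ^ (-((2 : ℝ) / 3)))).add_const ((2 / 5) * Zt)
  refine h.congr_deriv ?_
  rw [Real.div_rpow hx.le hZt, Real.rpow_neg hZt, show (5 : ℝ) / 3 - 1 = 2 / 3 by norm_num]
  ring

theorem Pfun_upperBranch_self (hZt : 0 < Zt) :
    (3 / 5) * Zt ^ ((5 : ℝ) / 3) * Zt ^ (-((2 : ℝ) / 3)) + (2 / 5) * Zt = Zt := by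
  rw [mul_assoc, ← Real.rpow_add hZt]
  norm_num
  ring

end UpperBranch

theorem hasDerivAt_Pfun {Zt : ℝ} (hZt : 0 < Zt) (Z : ℝ) :
    HasDerivAt (Pfun Zt) (P'fun Zt Z) Z := by
  rcases lt_trichotomy Z Zt with hlt | rfl | hgt
  · rw [P'fun, if_pos hlt.le]
    refine (hasDerivAt_id Z).congr_of_eventuallyEq ?_
    filter_upwards [Iio_mem_nhds hlt] with y hy
    simp [Pfun, (mem_Iio.mp hy).le]
  · have hupper := hasDerivAt_Pfun_upperBranch hZt.le hZt
    rw [div_self hZt.ne', Real.one_rpow] at hupper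
    rw [P'fun, if_pos le_rfl]
    exact (hasDerivAt_id Z).ite_le_of_eq hupper (Pfun_upperBranch_self hZt).symm
  · rw [P'fun, if_neg (not_le.mpr hgt)]
    refine (hasDerivAt_Pfun_upperBranch hZt.le (hZt.trans hgt)).congr_of_eventuallyEq ?_
    filter_upwards [Ioi_mem_nhds hgt] with y hy
    simp [Pfun, not_le.mpr (mem_Ioi.mp hy)]

theorem P'fun_pos {Zt : ℝ} (hZt : 0 < Zt) (Z : ℝ) : 0 < P'fun Zt Z := by
  unfold P'fun
  split_ifs with h
  · exact one_pos
  · exact Real.rpow_pos_of_pos (div_pos (hZt.trans (not_le.mp h)) hZt) _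

theorem five_thirds_Pfun_sub_P'fun_mul {Zt : ℝ} (hZt : 0 < Zt) (Z : ℝ) :
    (5 / 3) * Pfun Zt Z - P'fun Zt Z * Z = (2 / 3) * min Z Zt := by
  unfold Pfun P'fun
  split_ifs with h
  · rw [min_eq_left h]
    ring
  · have hZ : 0 < Z := hZt.trans (not_le.mp h)
    have hpow : (Z / Zt) ^ ((2 : ℝ) / 3) * Z = Z ^ ((5 : ℝ) / 3) * Zt ^ (-((2 : ℝ) / 3)) := by
      rw [Real.div_rpow hZ.le hZt.le, div_eq_mul_inv, ← Real.rpow_neg hZt.le, mul_right_comm,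
        ← Real.rpow_add_one hZ.ne']
      norm_num
    rw [min_eq_right (not_le.mp h).le, hpow]
    ring

section Scaling

variable {f : ℝ → ℝ} {f' ρ θ : ℝ}

theorem HasDerivAt.pressure_density (hf : HasDerivAt f f' (ρ * θ ^ (-((3 : ℝ) / 2))))
    (hθ : 0 < θ) :
    HasDerivAt (fun r => θ ^ ((5 : ℝ) / 2) * f (r * θ ^ (-((3 : ℝ) / 2)))) (θ * f') ρ := by
  have h := ((hf.comp ρ ((hasDerivAt_id ρ).mul_const (θ ^ (-((3 : ℝ) / 2))))).const_mul
    (θ ^ ((5 : ℝ) / 2)))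
  refine h.congr_deriv ?_
  rw [one_mul, mul_left_comm, ← Real.rpow_add hθ, mul_comm f']
  norm_num

theorem HasDerivAt.energy_temperature (hf : HasDerivAt f f' (ρ * θ ^ (-((3 : ℝ) / 2))))
    (hθ : 0 < θ) :
    HasDerivAt (fun t => (3 / 2) * t ^ ((5 : ℝ) / 2) * f (ρ * t ^ (-((3 : ℝ) / 2))) / ρ)
      ((9 / 4) * (θ ^ ((3 : ℝ) / 2) / ρ) *
        ((5 / 3) * f (ρ * θ ^ (-((3 : ℝ) / 2))) - f' * (ρ * θ ^ (-((3 : ℝ) / 2))))) θ := by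
  have hout := Real.hasDerivAt_rpow_const (p := (5 : ℝ) / 2) (Or.inl hθ.ne')
  have hin := (Real.hasDerivAt_rpow_const (p := -((3 : ℝ) / 2)) (Or.inl hθ.ne')).const_mul ρ
  have h := ((hout.const_mul (3 / 2)).mul (hf.comp θ hin)).div_const ρ
  refine h.congr_deriv ?_
  have hexp : θ ^ ((5 : ℝ) / 2 - 1) = θ ^ ((3 : ℝ) / 2) := by norm_num
  have hcancel32 : θ ^ ((3 : ℝ) / 2) * θ ^ (-((3 : ℝ) / 2)) = 1 := by
    rw [← Real.rpow_add hθ]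
    norm_num
  have hcancel52 : θ ^ ((5 : ℝ) / 2) * θ ^ (-((3 : ℝ) / 2) - 1) = 1 := by
    rw [← Real.rpow_add hθ]
    norm_num
  rw [hexp]
  simp only [Function.comp_apply]
  linear_combination (9 / 4 * f' * ρ / ρ) * hcancel32 - (9 / 4 * f' * ρ / ρ) * hcancel52

end Scaling

/-- Thermodynamic stability: for all `ρ > 0` and `θ > 0`,
`∂p/∂ρ(ρ,θ) = θ·P'(ρ·θ^{-3/2}) > 0` and
`∂e/∂θ(ρ,θ) = (9/4)·(θ^{3/2}/ρ)·((5/3)·P(Z) - P'(Z)·Z) > 0`, where `Z = ρ·θ^{-3/2}`. -/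
theorem stmt6 (Zt : ℝ) (hZt : 0 < Zt) :
    ∀ ρ θ : ℝ, 0 < ρ → 0 < θ →
      HasDerivAt (fun r => pfun Zt r θ) (θ * P'fun Zt (ρ * θ ^ (-((3 : ℝ) / 2)))) ρ ∧
      0 < θ * P'fun Zt (ρ * θ ^ (-((3 : ℝ) / 2))) ∧
      HasDerivAt (fun t => efun Zt ρ t)
        ((9 / 4) * (θ ^ ((3 : ℝ) / 2) / ρ) *
          ((5 / 3) * Pfun Zt (ρ * θ ^ (-((3 : ℝ) / 2))) -
            P'fun Zt (ρ * θ ^ (-((3 : ℝ) / 2))) * (ρ * θ ^ (-((3 : ℝ) / 2))))) θ ∧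
      0 < (9 / 4) * (θ ^ ((3 : ℝ) / 2) / ρ) *
          ((5 / 3) * Pfun Zt (ρ * θ ^ (-((3 : ℝ) / 2))) -
            P'fun Zt (ρ * θ ^ (-((3 : ℝ) / 2))) * (ρ * θ ^ (-((3 : ℝ) / 2)))) := by
  intro ρ θ hρ hθ
  have hP := hasDerivAt_Pfun hZt (ρ * θ ^ (-((3 : ℝ) / 2)))
  refine ⟨hP.pressure_density hθ, mul_pos hθ (P'fun_pos hZt _),
    hP.energy_temperature hθ, ?_⟩
  rw [five_thirds_Pfun_sub_P'fun_mul hZt]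
  positivity
end

section
/- At the point (y,Z) = (1,Z̃) one has F(1,Z̃) = 0, ∂F/∂y(1,Z̃) = 0 and ∂F/∂Z(1,Z̃) = 0, and the second-order partial derivatives there are ∂²F/∂y²(1,Z̃) = -5/3, ∂²F/∂Z²(1,Z̃) = -(7/15)·Z̃^{-2} and ∂²F/∂y∂Z(1,Z̃) = (2/3)·Z̃^{-1}; the corresponding 2×2 Hessian matrix [[-5/3, (2/3)·Z̃^{-1}], [(2/3)·Z̃^{-1}, -(7/15)·Z̃^{-2}]] is negative definite, so F attains a strict local maximum, of value 0, at (1,Z̃). -/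
/-- `S(Z) = 1 - log(Z/Z̃)` for `Z ≤ Z̃`, `S(Z) = Z̃/Z` for `Z > Z̃`. -/
noncomputable def Sfun (Zt Z : ℝ) : ℝ :=
  if Z ≤ Zt then 1 - Real.log (Z / Zt) else Zt / Z

/-- The derivative of `S`: `S'(Z) = -1/Z` for `Z ≤ Z̃`, `S'(Z) = -Z̃/Z²` for `Z > Z̃`. -/
noncomputable def S'fun (Zt Z : ℝ) : ℝ :=
  if Z ≤ Zt then -1 / Z else -Zt / Z ^ 2

/-- `F(y,Z) = S(Z) - S(Z̃) + 5/2 - 1/y - (3/2)·(P(Z)/Z^{5/3})·y^{2/3}·Z̃^{2/3}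
+ (1/10)·(S(Z) - S(Z̃))²`. -/
noncomputable def Ffun (Zt y Z : ℝ) : ℝ :=
  Sfun Zt Z - Sfun Zt Zt + 5 / 2 - 1 / y -
    (3 / 2) * (Pfun Zt Z / Z ^ ((5 : ℝ) / 3)) * y ^ ((2 : ℝ) / 3) * Zt ^ ((2 : ℝ) / 3) +
    (1 / 10) * (Sfun Zt Z - Sfun Zt Zt) ^ 2

/-- The partial derivative `∂F/∂y(y,Z) = 1/y² - (P(Z)/Z^{5/3})·Z̃^{2/3}·y^{-1/3}`. -/
noncomputable def Fy (Zt y Z : ℝ) : ℝ :=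
  1 / y ^ 2 - (Pfun Zt Z / Z ^ ((5 : ℝ) / 3)) * Zt ^ ((2 : ℝ) / 3) * y ^ (-((1 : ℝ) / 3))

/-- The partial derivative
`∂F/∂Z(y,Z) = S'(Z)·(1 - y^{2/3}·(Z̃/Z)^{2/3} + (1/5)·(S(Z) - S(Z̃)))`. -/
noncomputable def FZ (Zt y Z : ℝ) : ℝ :=
  S'fun Zt Z * (1 - y ^ ((2 : ℝ) / 3) * (Zt / Z) ^ ((2 : ℝ) / 3) +
    (1 / 5) * (Sfun Zt Z - Sfun Zt Zt))

open Real Set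

theorem hasDerivAt_ite_le {f g : ℝ → ℝ} {c x f' : ℝ} (hc : f c = g c)
    (hf : x ≤ c → HasDerivAt f f' x) (hg : c ≤ x → HasDerivAt g f' x) :
    HasDerivAt (fun z => if z ≤ c then f z else g z) f' x := by
  rcases lt_trichotomy x c with hx | rfl | hx
  · refine (hf hx.le).congr_of_eventuallyEq ?_
    filter_upwards [eventually_lt_nhds hx] with z hz using if_pos hz.le
  · have hl : HasDerivWithinAt (fun z => if z ≤ x then f z else g z) f' (Iic x) x :=
      (hf le_rfl).hasDerivWithinAt.congr (fun z hz => if_pos hz) (if_pos le_rfl)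
    have hr : HasDerivWithinAt (fun z => if z ≤ x then f z else g z) f' (Ici x) x := by
      refine (hg le_rfl).hasDerivWithinAt.congr (fun z (hz : x ≤ z) => ?_) (by simp [hc])
      split_ifs with h
      · rw [le_antisymm h hz, hc]
      · rfl
    simpa only [Iic_union_Ici, hasDerivWithinAt_univ] using hl.union hr
  · refine (hg hx.le).congr_of_eventuallyEq ?_
    filter_upwards [eventually_gt_nhds hx] with z hz using if_neg (not_le.2 hz)

theorem hasDerivAt_div_rpow {c p x : ℝ} (hc : 0 < c) (hx : 0 < x) :
    HasDerivAt (fun z => (c / z) ^ p) (-p * (c / x) ^ p / x) x := by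
  have hcx : 0 < c / x := div_pos hc hx
  have h := ((hasDerivAt_inv hx.ne').const_mul c).rpow_const (p := p) (Or.inl (by positivity))
  simp only [← div_eq_mul_inv] at h
  refine h.congr_deriv ?_
  rw [rpow_sub_one hcx.ne']
  field_simp

theorem rpow_one_third_pow {x : ℝ} (hx : 0 ≤ x) (n : ℕ) :
    (x ^ ((1 : ℝ) / 3)) ^ n = x ^ ((n : ℝ) / 3) := by
  rw [← rpow_natCast, ← rpow_mul hx]
  ring_nf

theorem abs_sub_one_le_abs_pow_three_sub_one {a : ℝ} (ha : 0 ≤ a) : |a - 1| ≤ |a ^ 3 - 1| := by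
  rw [show a ^ 3 - 1 = (a - 1) * (a ^ 2 + a + 1) by ring, abs_mul]
  exact le_mul_of_one_le_right (abs_nonneg _) (by rw [abs_of_pos (by positivity)]; nlinarith)

theorem dotProduct_mulVec_fin_two_neg {a b c : ℝ} (ha : a < 0) (hdet : b ^ 2 < a * c)
    {v : Fin 2 → ℝ} (hv : v ≠ 0) : dotProduct v (!![a, b; b, c].mulVec v) < 0 := by
  have hquad :
      dotProduct v (!![a, b; b, c].mulVec v) = a * v 0 ^ 2 + 2 * b * v 0 * v 1 + c * v 1 ^ 2 := by
    simp only [dotProduct, Matrix.mulVec, Fin.sum_univ_two, Matrix.of_apply, Matrix.cons_val',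
      Matrix.cons_val_zero, Matrix.cons_val_one, Matrix.empty_val', Matrix.cons_val_fin_one]
    ring
  refine hquad ▸ neg_of_mul_pos_right ?_ ha.le
  rcases eq_or_ne (v 1) 0 with h1 | h1
  · have h0 : v 0 ≠ 0 := fun h0 => hv (by ext i; fin_cases i <;> simp [h0, h1])
    simp only [h1]
    nlinarith [pow_pos (sq_pos_of_ne_zero h0) 1, sq_pos_of_neg ha]
  · nlinarith [sq_nonneg (a * v 0 + b * v 1), mul_pos (sub_pos.2 hdet) (sq_pos_of_ne_zero h1)]

section

variable {Zt y Z : ℝ}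

theorem Sfun_self (hZt : 0 < Zt) : Sfun Zt Zt = 1 := by
  simp [Sfun, div_self hZt.ne']

theorem Sfun_of_le (hZt : 0 < Zt) (hZ : Zt ≤ Z) : Sfun Zt Z = Zt / Z := by
  rcases hZ.eq_or_lt with rfl | hZ
  · simp [Sfun, div_self hZt.ne']
  · simp [Sfun, not_le.2 hZ]

theorem S'fun_of_le (hZt : 0 < Zt) (hZ : Zt ≤ Z) : S'fun Zt Z = -Zt / Z ^ 2 := by
  rcases hZ.eq_or_lt with rfl | hZ
  · simp only [S'fun, le_refl, if_true]
    field_simp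
  · simp [S'fun, not_le.2 hZ]

theorem hasDerivAt_Sfun (hZt : 0 < Zt) (hZ : 0 < Z) : HasDerivAt (Sfun Zt) (S'fun Zt Z) Z := by
  show HasDerivAt (fun z => if z ≤ Zt then 1 - log (z / Zt) else Zt / z) _ _
  refine hasDerivAt_ite_le (by simp [div_self hZt.ne']) (fun h => ?_) (fun h => ?_)
  · refine ((((hasDerivAt_id Z).div_const Zt).log (div_pos hZ hZt).ne').const_sub 1).congr_deriv ?_
    simp only [S'fun, if_pos h, id]
    field_simp
  · refine ((hasDerivAt_inv hZ.ne').const_mul Zt).congr_deriv ?_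
    rw [S'fun_of_le hZt h]
    ring

theorem hasDerivWithinAt_S'fun_Ici (hZt : 0 < Zt) :
    HasDerivWithinAt (S'fun Zt) (2 / Zt ^ 2) (Ici Zt) Zt := by
  have h := ((hasDerivAt_pow 2 Zt).fun_inv (pow_ne_zero 2 hZt.ne')).const_mul (-Zt)
  refine (h.hasDerivWithinAt.congr (fun Z hZ => ?_) ?_).congr_deriv ?_
  · rw [S'fun_of_le hZt hZ, div_eq_mul_inv]
  · rw [S'fun_of_le hZt le_rfl, div_eq_mul_inv]
  · field_simp
    ring

noncomputable def Rfun (Zt Z : ℝ) : ℝ := Pfun Zt Z / Z ^ ((5 : ℝ) / 3) * Zt ^ ((2 : ℝ) / 3)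

theorem Rfun_eq (hZt : 0 < Zt) (hZ : 0 < Z) :
    Rfun Zt Z =
      if Z ≤ Zt then (Zt / Z) ^ ((2 : ℝ) / 3) else 3 / 5 + 2 / 5 * (Zt / Z) ^ ((5 : ℝ) / 3) := by
  have h53 : ∀ x : ℝ, 0 < x → x ^ ((5 : ℝ) / 3) = x ^ ((2 : ℝ) / 3) * x := fun x hx => by
    rw [← rpow_add_one hx.ne']; norm_num
  have hZ23 := rpow_pos_of_pos hZ ((2 : ℝ) / 3)
  have hZt23 := rpow_pos_of_pos hZt ((2 : ℝ) / 3)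
  simp only [Rfun, Pfun, div_rpow hZt.le hZ.le, rpow_neg hZt.le, h53 Z hZ, h53 Zt hZt]
  split_ifs <;> field_simp

theorem Rfun_self (hZt : 0 < Zt) : Rfun Zt Zt = 1 := by
  simp [Rfun_eq hZt hZt, div_self hZt.ne']

theorem Rfun_of_le (hZt : 0 < Zt) (hZ : Zt ≤ Z) :
    Rfun Zt Z = 3 / 5 + 2 / 5 * (Zt / Z) ^ ((5 : ℝ) / 3) := by
  rw [Rfun_eq hZt (hZt.trans_le hZ)]
  split_ifs with h
  · rw [le_antisymm h hZ, div_self hZt.ne', one_rpow, one_rpow]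
    norm_num
  · rfl

theorem hasDerivAt_Rfun (hZt : 0 < Zt) (hZ : 0 < Z) :
    HasDerivAt (Rfun Zt) (2 / 3 * (Zt / Z) ^ ((2 : ℝ) / 3) * S'fun Zt Z) Z := by
  have hR : Rfun Zt =ᶠ[nhds Z] fun z =>
      if z ≤ Zt then (Zt / z) ^ ((2 : ℝ) / 3) else 3 / 5 + 2 / 5 * (Zt / z) ^ ((5 : ℝ) / 3) := by
    filter_upwards [eventually_gt_nhds hZ] with z hz using Rfun_eq hZt hz
  refine HasDerivAt.congr_of_eventuallyEq ?_ hR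
  refine hasDerivAt_ite_le (by simp [div_self hZt.ne']; norm_num) (fun h => ?_) (fun h => ?_)
  · refine (hasDerivAt_div_rpow hZt hZ).congr_deriv ?_
    simp only [S'fun, if_pos h]
    ring
  · refine ((hasDerivAt_div_rpow hZt hZ).const_mul (2 / 5) |>.const_add (3 / 5)).congr_deriv ?_
    rw [S'fun_of_le hZt h, show (5 : ℝ) / 3 = 2 / 3 + 1 by norm_num,
      rpow_add_one (div_pos hZt hZ).ne']
    field_simp
    ring

theorem Ffun_eq (Zt y Z : ℝ) :
    Ffun Zt y Z = Sfun Zt Z - Sfun Zt Zt + 5 / 2 - 1 / y - 3 / 2 * Rfun Zt Z * y ^ ((2 : ℝ) / 3) +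
      1 / 10 * (Sfun Zt Z - Sfun Zt Zt) ^ 2 := by
  unfold Ffun Rfun
  ring

theorem Fy_eq (Zt y Z : ℝ) : Fy Zt y Z = 1 / y ^ 2 - Rfun Zt Z * y ^ (-((1 : ℝ) / 3)) := by
  unfold Fy Rfun
  ring

theorem hasDerivAt_Ffun_y (Zt Z : ℝ) (hy : 0 < y) :
    HasDerivAt (fun y' => Ffun Zt y' Z) (Fy Zt y Z) y := by
  simp only [Ffun_eq, Fy_eq]
  have hinv : HasDerivAt (fun y' : ℝ => 1 / y') (-(y ^ 2)⁻¹) y := by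
    simpa only [one_div] using hasDerivAt_inv hy.ne'
  have hpow := hasDerivAt_rpow_const (p := (2 : ℝ) / 3) (Or.inl hy.ne')
  refine ((((hasDerivAt_const y _).sub hinv).sub (hpow.const_mul _)).add_const _).congr_deriv ?_
  rw [show (2 : ℝ) / 3 - 1 = -(1 / 3) by norm_num]
  ring

theorem hasDerivAt_Ffun_Z (y : ℝ) (hZt : 0 < Zt) (hZ : 0 < Z) :
    HasDerivAt (fun Z' => Ffun Zt y Z') (FZ Zt y Z) Z := by
  simp only [Ffun_eq]
  have hS := (hasDerivAt_Sfun hZt hZ).sub_const (Sfun Zt Zt)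
  have hR := ((hasDerivAt_Rfun hZt hZ).const_mul (3 / 2)).mul_const (y ^ ((2 : ℝ) / 3))
  refine ((((hS.add_const _).sub_const _).sub hR).add ((hS.pow 2).const_mul _)).congr_deriv ?_
  unfold FZ
  ring

theorem Ffun_one_self (hZt : 0 < Zt) : Ffun Zt 1 Zt = 0 := by
  rw [Ffun_eq, Rfun_self hZt, one_rpow]
  ring

theorem Fy_one_self (hZt : 0 < Zt) : Fy Zt 1 Zt = 0 := by
  rw [Fy_eq, Rfun_self hZt, one_rpow]
  ring

theorem FZ_one_self (hZt : 0 < Zt) : FZ Zt 1 Zt = 0 := by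
  simp [FZ, div_self hZt.ne']

theorem hasDerivAt_Fy_one_self (hZt : 0 < Zt) : HasDerivAt (fun y => Fy Zt y Zt) (-(5 / 3)) 1 := by
  simp only [Fy_eq, Rfun_self hZt, one_mul]
  refine (((hasDerivAt_const (1 : ℝ) (1 : ℝ)).fun_div (hasDerivAt_pow 2 1) (by norm_num)).fun_sub
    (hasDerivAt_rpow_const (p := -((1 : ℝ) / 3)) (Or.inl one_ne_zero))).congr_deriv ?_
  norm_num

theorem hasDerivAt_Fy_one_Z (hZt : 0 < Zt) : HasDerivAt (fun Z => Fy Zt 1 Z) (2 / 3 / Zt) Zt := by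
  simp only [Fy_eq, one_rpow, mul_one]
  refine ((hasDerivAt_Rfun hZt hZt).const_sub _).congr_deriv ?_
  simp only [S'fun, le_refl, if_true, div_self hZt.ne', one_rpow]
  ring

theorem hasDerivWithinAt_FZ_one (hZt : 0 < Zt) :
    HasDerivWithinAt (fun Z => FZ Zt 1 Z) (-(7 / 15) / Zt ^ 2) (Ici Zt) Zt := by
  simp only [FZ, one_rpow, one_mul]
  have hbracket := ((hasDerivAt_div_rpow (p := (2 : ℝ) / 3) hZt hZt).const_sub 1).fun_add
    (((hasDerivAt_Sfun hZt hZt).sub_const (Sfun Zt Zt)).const_mul (1 / 5))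
  refine ((hasDerivWithinAt_S'fun_Ici hZt).fun_mul hbracket.hasDerivWithinAt).congr_deriv ?_
  simp only [S'fun, le_refl, if_true, div_self hZt.ne', one_rpow]
  field_simp
  ring

noncomputable def Fcube (a b : ℝ) : ℝ :=
  b ^ 3 - 1 + 5 / 2 - 1 / a ^ 3 - 3 / 2 * (3 / 5 + 2 / 5 * b ^ 5) * a ^ 2 + 1 / 10 * (b ^ 3 - 1) ^ 2

theorem Fcube_right_one_le {a : ℝ} (ha0 : 0 < a) (ha : a ≤ 21 / 20) :
    Fcube a 1 ≤ -6 * (a - 1) ^ 2 := by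
  have h : Fcube a 1 + 6 * (a - 1) ^ 2 =
      -((a - 1) ^ 2 * (6 * a ^ 2 + 4 * a + 2 - 9 * a ^ 3) / (2 * a ^ 3)) := by
    unfold Fcube
    field_simp
    ring
  have : 0 ≤ (a - 1) ^ 2 * (6 * a ^ 2 + 4 * a + 2 - 9 * a ^ 3) / (2 * a ^ 3) :=
    div_nonneg (mul_nonneg (sq_nonneg _) (by nlinarith)) (by positivity)
  linarith

theorem Fcube_one_left_le {b : ℝ} (hb₀ : 19 / 20 ≤ b) (hb₁ : b ≤ 1) :
    Fcube 1 b ≤ -(19 / 10) * (1 - b) ^ 2 := by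
  have h : Fcube 1 b + 19 / 10 * (1 - b) ^ 2 =
      -((1 - b) ^ 2 * (1 / 5 - 16 / 5 * (1 - b) + (1 - b) ^ 2 * (3 / 2 - 1 / 10 * (1 - b) ^ 2))) := by
    unfold Fcube
    ring
  have : 0 ≤ 1 / 5 - 16 / 5 * (1 - b) + (1 - b) ^ 2 * (3 / 2 - 1 / 10 * (1 - b) ^ 2) := by
    nlinarith [mul_nonneg (sq_nonneg (1 - b)) (show 0 ≤ 3 / 2 - 1 / 10 * (1 - b) ^ 2 by nlinarith)]
  nlinarith [mul_nonneg (sq_nonneg (1 - b)) this]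

theorem Fcube_neg {a b : ℝ} (ha : |a - 1| ≤ 1 / 20) (hb : |b - 1| ≤ 1 / 20) (hb1 : b ≤ 1)
    (hne : (a, b) ≠ (1, 1)) : Fcube a b < 0 := by
  obtain ⟨ha₁, ha₂⟩ := abs_le.1 ha
  obtain ⟨hb₁, -⟩ := abs_le.1 hb
  have ha0 : 0 < a := by linarith
  have hb0 : 0 < b := by linarith
  set m := (a + 1) * (1 + b + b ^ 2 + b ^ 3 + b ^ 4)
  have hsplit : Fcube a b = Fcube a 1 + Fcube 1 b + 3 / 5 * ((a - 1) * (1 - b)) * m := by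
    unfold Fcube
    ring
  have hm0 : 0 ≤ m := by positivity
  have hm1 : m ≤ 41 / 4 := by
    have h2 : b ^ 2 ≤ 1 := pow_le_one₀ hb0.le hb1
    have h3 : b ^ 3 ≤ 1 := pow_le_one₀ hb0.le hb1
    have h4 : b ^ 4 ≤ 1 := pow_le_one₀ hb0.le hb1
    nlinarith
  have hw0 : 0 ≤ 1 - b := by linarith
  have hcross : 3 / 5 * ((a - 1) * (1 - b)) * m ≤ 123 / 20 * (|a - 1| * (1 - b)) := by
    have h := le_abs_self ((a - 1) * (1 - b) * m)
    rw [abs_mul, abs_mul, abs_of_nonneg hw0, abs_of_nonneg hm0] at h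
    nlinarith [mul_nonneg (abs_nonneg (a - 1)) hw0]
  have hpos : 0 < |a - 1| ^ 2 + (1 - b) ^ 2 := by
    rcases eq_or_ne a 1 with rfl | ha1
    · have hb : 1 - b ≠ 0 := sub_ne_zero.2 fun hb => hne (by rw [← hb])
      positivity
    · have : |a - 1| ≠ 0 := abs_ne_zero.2 (sub_ne_zero.2 ha1)
      positivity
  have hA := Fcube_right_one_le ha0 (by linarith)
  have hB := Fcube_one_left_le (by linarith) hb1
  rw [hsplit]
  nlinarith [sq_abs (a - 1), sq_nonneg (40 * |a - 1| - 21 * (1 - b))]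

theorem Ffun_eq_Fcube (hZt : 0 < Zt) (hy : 0 < y) (hZ : Zt ≤ Z) :
    Ffun Zt y Z = Fcube (y ^ ((1 : ℝ) / 3)) ((Zt / Z) ^ ((1 : ℝ) / 3)) := by
  have hr : 0 ≤ Zt / Z := div_nonneg hZt.le (hZt.trans_le hZ).le
  rw [Ffun_eq, Sfun_of_le hZt hZ, Sfun_self hZt, Rfun_of_le hZt hZ]
  simp only [Fcube, rpow_one_third_pow hy.le, rpow_one_third_pow hr]
  norm_num

theorem Ffun_lt_Ffun_one_self_near (hZt : 0 < Zt) :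
    ∃ ε > 0, ∀ y Z : ℝ, 0 < y → Zt ≤ Z → |y - 1| < ε → |Z - Zt| < ε →
      (y, Z) ≠ (1, Zt) → Ffun Zt y Z < Ffun Zt 1 Zt := by
  refine ⟨min (1 / 20) (Zt / 20), by positivity, fun y Z hy hZ hyε hZε hne => ?_⟩
  have hZ0 : 0 < Z := hZt.trans_le hZ
  have hr : 0 < Zt / Z := div_pos hZt hZ0
  have hr1 : Zt / Z ≤ 1 := div_le_one_of_le₀ hZ hZ0.le
  have hr0 : 20 / 21 ≤ Zt / Z := by
    rw [le_div_iff₀ hZ0]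
    linarith [(abs_lt.1 hZε).2, min_le_right (1 / 20 : ℝ) (Zt / 20)]
  rw [Ffun_one_self hZt, Ffun_eq_Fcube hZt hy hZ]
  set a := y ^ ((1 : ℝ) / 3)
  set b := (Zt / Z) ^ ((1 : ℝ) / 3)
  have ha3 : a ^ 3 = y := by rw [rpow_one_third_pow hy.le]; norm_num
  have hb3 : b ^ 3 = Zt / Z := by rw [rpow_one_third_pow hr.le]; norm_num
  have hb0 : 0 ≤ b := rpow_nonneg hr.le _
  apply Fcube_neg
  · have := abs_sub_one_le_abs_pow_three_sub_one (rpow_nonneg hy.le ((1 : ℝ) / 3))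
    rw [ha3] at this
    linarith [min_le_left (1 / 20 : ℝ) (Zt / 20)]
  · have := abs_sub_one_le_abs_pow_three_sub_one hb0
    rw [hb3, abs_of_nonpos (show Zt / Z - 1 ≤ 0 by linarith)] at this
    linarith
  · exact (pow_le_one_iff_of_nonneg hb0 three_ne_zero).1 (hb3 ▸ hr1)
  · intro h
    obtain ⟨ha1, hb1⟩ := Prod.mk.inj h
    have hy1 : y = 1 := by rw [← ha3, ha1, one_pow]
    have hZ1 : Zt / Z = 1 := by rw [← hb3, hb1, one_pow]
    exact hne (Prod.ext hy1 ((div_eq_one_iff_eq hZ0.ne').1 hZ1).symm)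

end

/-- At `(y,Z) = (1,Z̃)`: `F(1,Z̃) = 0`, `∂F/∂y(1,Z̃) = 0`, `∂F/∂Z(1,Z̃) = 0`, and the
second-order partial derivatives are `∂²F/∂y²(1,Z̃) = -5/3`,
`∂²F/∂Z²(1,Z̃) = -(7/15)·Z̃⁻²` and `∂²F/∂y∂Z(1,Z̃) = (2/3)·Z̃⁻¹` (one-sided in `Z` from
the region `Z ≥ Z̃`); the Hessian matrix `[[-5/3, (2/3)/Z̃], [(2/3)/Z̃, -(7/15)/Z̃²]]` is
negative definite, so `F` attains a strict local maximum, of value `0`, at `(1,Z̃)`. -/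
theorem stmt10 (Zt : ℝ) (hZt : 0 < Zt) :
    Ffun Zt 1 Zt = 0 ∧
    (∀ y Z : ℝ, 0 < y → 0 < Z →
      HasDerivAt (fun y' => Ffun Zt y' Z) (Fy Zt y Z) y ∧
      HasDerivAt (fun Z' => Ffun Zt y Z') (FZ Zt y Z) Z) ∧
    Fy Zt 1 Zt = 0 ∧
    FZ Zt 1 Zt = 0 ∧
    HasDerivAt (fun y => Fy Zt y Zt) (-(5 / 3)) 1 ∧
    HasDerivWithinAt (fun Z => FZ Zt 1 Z) (-(7 / 15) / Zt ^ 2) (Set.Ici Zt) Zt ∧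
    HasDerivWithinAt (fun Z => Fy Zt 1 Z) ((2 / 3) / Zt) (Set.Ici Zt) Zt ∧
    (∀ v : Fin 2 → ℝ, v ≠ 0 →
      dotProduct v
        ((!![-(5 / 3), (2 / 3) / Zt; (2 / 3) / Zt, -(7 / 15) / Zt ^ 2] :
          Matrix (Fin 2) (Fin 2) ℝ).mulVec v) < 0) ∧
    (∃ ε > 0, ∀ y Z : ℝ, 0 < y → Zt ≤ Z → |y - 1| < ε → |Z - Zt| < ε →
      (y, Z) ≠ (1, Zt) → Ffun Zt y Z < Ffun Zt 1 Zt) := by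
  have hdet : ((2 / 3) / Zt) ^ 2 < -(5 / 3) * (-(7 / 15) / Zt ^ 2) := by
    field_simp
    norm_num
  exact ⟨Ffun_one_self hZt,
    fun y Z hy hZ => ⟨hasDerivAt_Ffun_y Zt Z hy, hasDerivAt_Ffun_Z y hZt hZ⟩,
    Fy_one_self hZt, FZ_one_self hZt, hasDerivAt_Fy_one_self hZt, hasDerivWithinAt_FZ_one hZt,
    (hasDerivAt_Fy_one_Z hZt).hasDerivWithinAt,
    fun v hv => dotProduct_mulVec_fin_two_neg (by norm_num) hdet hv,
    Ffun_lt_Ffun_one_self_near hZt⟩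
end
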